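/- arXiv:2304.12375 — 4 statements merged into one kernel-verified Lean document; each statement's English description precedes it below -/
import Mathlib

section
/- Let A_n → A and B_n → B in the Hausdorff metric, with all sets nonempty compact subsets of ℝ^d. Then the upper Kuratowski limit of the sequence of sets Π(A_n, B_n) ⊆ ℝ^d × ℝ^d is contained in Π(A,B). -/
open Filter Metric Topology Set TopologicalSpace

noncomputable section

/-- The set of projections of `x` on `B`: points of `B` nearest to `x`. -/
def metricProj {E : Type*} [MetricSpace E] (x : E) (B : Set E) : Set E :=
  {b ∈ B | dist x b = Metric.infDist x B}

/-- The set of metric pairs of `A` and `B`. -/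
def MetricPairs {E : Type*} [MetricSpace E] (A B : Set E) : Set (E × E) :=
  {p | p.1 ∈ A ∧ p.2 ∈ B ∧ (p.1 ∈ metricProj p.2 A ∨ p.2 ∈ metricProj p.1 B)}

/-- A partition `a = x_0 < x_1 < ... < x_n = b` of `[a,b]`. -/
structure IntervalPartition (a b : ℝ) where
  n : ℕ
  pts : Fin (n + 1) → ℝ
  mono : StrictMono pts
  first : pts 0 = a
  last : pts (Fin.last n) = b

/-- The norm `|χ| = max_i (x_{i+1} - x_i)` of a partition. -/
noncomputable def IntervalPartition.meshNorm {a b : ℝ} (χ : IntervalPartition a b) : ℝ :=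
  ⨆ i : Fin χ.n, (χ.pts i.succ - χ.pts i.castSucc)

/-- `c` is a chain function of the set-valued function `F` based on the partition `χ`:
it is piecewise constant, with values at consecutive partition points forming metric pairs
of the corresponding values of `F`. -/
def IsChainFun {E : Type*} [MetricSpace E] {a b : ℝ}
    (F : ℝ → Set E) (χ : IntervalPartition a b) (c : ℝ → E) : Prop :=
  ∃ y : Fin (χ.n + 1) → E,
    (∀ i : Fin χ.n,
      (y i.castSucc, y i.succ) ∈ MetricPairs (F (χ.pts i.castSucc)) (F (χ.pts i.succ))) ∧
    (∀ i : Fin χ.n, ∀ t ∈ Set.Ico (χ.pts i.castSucc) (χ.pts i.succ), c t = y i.castSucc) ∧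
    c b = y (Fin.last χ.n)

/-- `s` is a metric selection of `F` on `[a,b]`: a selection of `F` which is the pointwise
limit of a sequence of chain functions of `F` whose partition norms tend to `0`. -/
def IsMetricSelection {E : Type*} [MetricSpace E] (F : ℝ → Set E) (a b : ℝ) (s : ℝ → E) : Prop :=
  (∀ x ∈ Set.Icc a b, s x ∈ F x) ∧
  ∃ χ : ℕ → IntervalPartition a b, ∃ c : ℕ → ℝ → E,
    (∀ k, IsChainFun F (χ k) (c k)) ∧
    Filter.Tendsto (fun k => (χ k).meshNorm) Filter.atTop (nhds 0) ∧
    ∀ x ∈ Set.Icc a b, Filter.Tendsto (fun k => c k x) Filter.atTop (nhds (s x))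

/-- Property 2 of `F` at `ξ`, with `Fm = F(ξ-)`, `Fp = F(ξ+)`: every metric pair of the
one-sided limits is a limit of metric pairs `(y_n^-, y_n^+) ∈ Π(F(ξ_n^-), F(ξ_n^+))`
with `ξ_n^- < ξ < ξ_n^+`, `ξ_n^± → ξ`. -/
def Property2 {E : Type*} [MetricSpace E] (F : ℝ → Set E) (a b ξ : ℝ)
    (Fm Fp : Set E) : Prop :=
  ∀ ym yp : E, (ym, yp) ∈ MetricPairs Fm Fp →
    ∃ ξm ξp : ℕ → ℝ, ∃ ym' yp' : ℕ → E,
      (∀ n, ξm n ∈ Set.Ico a ξ) ∧ (∀ n, ξp n ∈ Set.Ioc ξ b) ∧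
      Filter.Tendsto ξm Filter.atTop (nhds ξ) ∧ Filter.Tendsto ξp Filter.atTop (nhds ξ) ∧
      (∀ n, (ym' n, yp' n) ∈ MetricPairs (F (ξm n)) (F (ξp n))) ∧
      Filter.Tendsto ym' Filter.atTop (nhds ym) ∧ Filter.Tendsto yp' Filter.atTop (nhds yp)

/-- The metric average `(1/2) A ⊕ (1/2) B = {(a+b)/2 : (a,b) ∈ Π(A,B)}`. -/
def metricAvg {E : Type*} [NormedAddCommGroup E] [NormedSpace ℝ E] (A B : Set E) : Set E :=
  {v | ∃ p ∈ MetricPairs A B, v = (2⁻¹ : ℝ) • (p.1 + p.2)}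

/-- The limit set `A_F(x) = {(s(x-) + s(x+))/2 : s a metric selection of F}`. -/
def limitSet {E : Type*} [NormedAddCommGroup E] [NormedSpace ℝ E]
    (F : ℝ → Set E) (a b x : ℝ) : Set E :=
  {v | ∃ s : ℝ → E, ∃ sm sp : E, IsMetricSelection F a b s ∧
      Filter.Tendsto s (nhdsWithin x (Set.Ico a x)) (nhds sm) ∧
      Filter.Tendsto s (nhdsWithin x (Set.Ioc x b)) (nhds sp) ∧
      v = (2⁻¹ : ℝ) • (sm + sp)}

/-- The left local quasi-modulus `ω̃⁻(f, xs, δ)` of `f` at `xs`, where `fl = f(xs-)`. -/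
noncomputable def qmodLeft {X : Type*} [PseudoMetricSpace X]
    (f : ℝ → X) (fl : X) (a b xs δ : ℝ) : ℝ :=
  sSup {r | ∃ x ∈ Set.Ico (xs - δ) xs ∩ Set.Icc a b, r = dist fl (f x)}

/-- The right local quasi-modulus `ω̃⁺(f, xs, δ)` of `f` at `xs`, where `fr = f(xs+)`. -/
noncomputable def qmodRight {X : Type*} [PseudoMetricSpace X]
    (f : ℝ → X) (fr : X) (a b xs δ : ℝ) : ℝ :=
  sSup {r | ∃ x ∈ Set.Ioc xs (xs + δ) ∩ Set.Icc a b, r = dist fr (f x)}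

/-- The graph of a set-valued function on `[a,b]` is compact. -/
def HasCompactGraph {E : Type*} [MetricSpace E] (F : ℝ → Set E) (a b : ℝ) : Prop :=
  IsCompact {p : ℝ × E | p.1 ∈ Set.Icc a b ∧ p.2 ∈ F p.1}

/-- The (real-valued) variation function `v_f(x) = V_a^x(f)`. -/
noncomputable def varFun {X : Type*} [PseudoEMetricSpace X] (f : ℝ → X) (a x : ℝ) : ℝ :=
  (eVariationOn f (Set.Icc a x)).toReal

/-- Upper Kuratowski limit of a sequence of sets in a topological space. -/
def kuratowskiLimsup {X : Type*} [TopologicalSpace X] (C : ℕ → Set X) : Set X :=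
  {x | ∃ φ : ℕ → ℕ, StrictMono φ ∧ ∃ c : ℕ → X,
    (∀ k, c k ∈ C (φ k)) ∧ Filter.Tendsto c Filter.atTop (nhds x)}

/-! The distance from a point to a set is 1-Lipschitz in the point and in the set (for the
Hausdorff distance), so `infDist (y n) (S n) → infDist y T`. Hence limits of points of `S n` lie in `T`,
and limits of nearest points are nearest points. A sequence of metric pairs has a subsequence
along which the same one of the two projection conditions holds, so its limits are metric pairs. -/

namespace Metric

variable {α ι : Type*}

theorem abs_infDist_sub_infDist_le_hausdorffDist [PseudoMetricSpace α] {s t : Set α} {x : α}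
    (fin : hausdorffEDist s t ≠ ⊤) : |infDist x s - infDist x t| ≤ hausdorffDist s t := by
  have fin' : hausdorffEDist t s ≠ ⊤ := by rwa [hausdorffEDist_comm]
  rw [abs_sub_le_iff]
  constructor
  · linarith [infDist_le_infDist_add_hausdorffDist (x := x) fin',
      hausdorffDist_comm (s := s) (t := t)]
  · linarith [infDist_le_infDist_add_hausdorffDist (x := x) fin]

theorem tendsto_infDist_of_tendsto_hausdorffDist [PseudoMetricSpace α] {l : Filter ι}
    {S : ι → Set α} {T : Set α} {y : ι → α} {y₀ : α}
    (hfin : ∀ᶠ n in l, hausdorffEDist (S n) T ≠ ⊤)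
    (hS : Tendsto (fun n => hausdorffDist (S n) T) l (𝓝 0)) (hy : Tendsto y l (𝓝 y₀)) :
    Tendsto (fun n => infDist (y n) (S n)) l (𝓝 (infDist y₀ T)) := by
  rw [tendsto_iff_dist_tendsto_zero]
  refine squeeze_zero' (Eventually.of_forall fun n => dist_nonneg) ?_
    (by simpa using hS.add (tendsto_iff_dist_tendsto_zero.1 hy))
  filter_upwards [hfin] with n hn
  calc dist (infDist (y n) (S n)) (infDist y₀ T)
      ≤ dist (infDist (y n) (S n)) (infDist (y n) T) + dist (infDist (y n) T) (infDist y₀ T) :=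
        dist_triangle _ _ _
    _ ≤ hausdorffDist (S n) T + dist (y n) y₀ := by
        gcongr
        · exact abs_infDist_sub_infDist_le_hausdorffDist hn
        · simpa using (lipschitz_infDist_pt T).dist_le_mul (y n) y₀

theorem mem_of_tendsto_hausdorffDist [PseudoMetricSpace α] {l : Filter ι}
    {S : ι → Set α} {T : Set α} {z : ι → α} {z₀ : α} (hT : IsClosed T) (hTne : T.Nonempty)
    (hfin : ∀ᶠ n in l, hausdorffEDist (S n) T ≠ ⊤)
    (hS : Tendsto (fun n => hausdorffDist (S n) T) l (𝓝 0)) (hz : Tendsto z l (𝓝 z₀))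
    (hmem : ∃ᶠ n in l, z n ∈ S n) : z₀ ∈ T := by
  rw [hT.mem_iff_infDist_zero hTne]
  exact tendsto_nhds_unique_of_frequently_eq
    (tendsto_infDist_of_tendsto_hausdorffDist hfin hS hz) tendsto_const_nhds (hmem.mono fun n hn => infDist_zero_of_mem hn)

end Metric

section MetricPairs

variable {E ι : Type*} [MetricSpace E] {l : Filter ι}

theorem mem_metricProj_of_tendsto {S : ι → Set E} {T : Set E} {x y : ι → E} {x₀ y₀ : E}
    (hT : IsClosed T) (hTne : T.Nonempty) (hfin : ∀ᶠ n in l, hausdorffEDist (S n) T ≠ ⊤)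
    (hS : Tendsto (fun n => hausdorffDist (S n) T) l (𝓝 0))
    (hx : Tendsto x l (𝓝 x₀)) (hy : Tendsto y l (𝓝 y₀))
    (hproj : ∃ᶠ n in l, x n ∈ metricProj (y n) (S n)) : x₀ ∈ metricProj y₀ T :=
  ⟨mem_of_tendsto_hausdorffDist hT hTne hfin hS hx (hproj.mono fun _ hn => hn.1),
    tendsto_nhds_unique_of_frequently_eq (hy.dist hx)
      (tendsto_infDist_of_tendsto_hausdorffDist hfin hS hy) (hproj.mono fun _ hn => hn.2)⟩

theorem mem_metricPairs_of_tendsto {A B : ι → Set E} {A₀ B₀ : Set E}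
    {p : ι → E × E} {p₀ : E × E} (hA₀ : IsClosed A₀) (hA₀ne : A₀.Nonempty)
    (hB₀ : IsClosed B₀) (hB₀ne : B₀.Nonempty)
    (hAfin : ∀ᶠ n in l, hausdorffEDist (A n) A₀ ≠ ⊤)
    (hBfin : ∀ᶠ n in l, hausdorffEDist (B n) B₀ ≠ ⊤)
    (hA : Tendsto (fun n => hausdorffDist (A n) A₀) l (𝓝 0))
    (hB : Tendsto (fun n => hausdorffDist (B n) B₀) l (𝓝 0))
    (hp : Tendsto p l (𝓝 p₀)) (hpairs : ∃ᶠ n in l, p n ∈ MetricPairs (A n) (B n)) :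
    p₀ ∈ MetricPairs A₀ B₀ := by
  have h₁ : Tendsto (fun n => (p n).1) l (𝓝 p₀.1) := (continuous_fst.tendsto p₀).comp hp
  have h₂ : Tendsto (fun n => (p n).2) l (𝓝 p₀.2) := (continuous_snd.tendsto p₀).comp hp
  refine ⟨mem_of_tendsto_hausdorffDist hA₀ hA₀ne hAfin hA h₁ (hpairs.mono fun _ hn => hn.1),
    mem_of_tendsto_hausdorffDist hB₀ hB₀ne hBfin hB h₂ (hpairs.mono fun _ hn => hn.2.1), ?_⟩
  rcases frequently_or_distrib.1 (hpairs.mono fun _ hn => hn.2.2) with h | h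
  · exact .inl (mem_metricProj_of_tendsto hA₀ hA₀ne hAfin hA h₁ h₂ h)
  · exact .inr (mem_metricProj_of_tendsto hB₀ hB₀ne hBfin hB h₂ h₁ h)

end MetricPairs

/-- the upper Kuratowski limit of `Π(A_n, B_n)` is contained in `Π(A,B)`. -/
theorem stmt_2 {d : ℕ} (A B : Set (EuclideanSpace ℝ (Fin d)))
    (An Bn : ℕ → Set (EuclideanSpace ℝ (Fin d)))
    (hA : IsCompact A) (hAne : A.Nonempty) (hB : IsCompact B) (hBne : B.Nonempty)
    (hAn : ∀ n, IsCompact (An n)) (hAnne : ∀ n, (An n).Nonempty)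
    (hBn : ∀ n, IsCompact (Bn n)) (hBnne : ∀ n, (Bn n).Nonempty)
    (hAconv : Filter.Tendsto (fun n => Metric.hausdorffDist (An n) A) Filter.atTop (nhds 0))
    (hBconv : Filter.Tendsto (fun n => Metric.hausdorffDist (Bn n) B) Filter.atTop (nhds 0)) :
    kuratowskiLimsup (fun n => MetricPairs (An n) (Bn n)) ⊆ MetricPairs A B := by
  rintro p ⟨φ, hφ, c, hc, hcp⟩
  have hφ' : Tendsto φ atTop atTop := hφ.tendsto_atTop
  exact mem_metricPairs_of_tendsto hA.isClosed hAne hB.isClosed hBne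
    (Eventually.of_forall fun k => hausdorffEDist_ne_top_of_nonempty_of_bounded (hAnne (φ k))
      hAne (hAn (φ k)).isBounded hA.isBounded)
    (Eventually.of_forall fun k => hausdorffEDist_ne_top_of_nonempty_of_bounded (hBnne (φ k))
      hBne (hBn (φ k)).isBounded hB.isBounded)
    (hAconv.comp hφ') (hBconv.comp hφ') hcp (Frequently.of_forall hc)
end
end

section
/- Let F : [a,b] → K(ℝ^d) be a set-valued function of bounded variation (in the Hausdorff metric) with compact graph, and let x ∈ (a,b). Then F(x−) ∪ F(x+) ⊆ F(x). -/
open Filter Metric Topology Set TopologicalSpace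

noncomputable section

/-
A point `y` of the Hausdorff limit `G` of `F t` along `t → x` is the limit of nearest points
`g t ∈ F t` to `y`, since `dist y (g t) = infDist y (F t) → infDist y G = 0`. The points
`(t, g t)` lie in the graph, which is closed, so their limit `(x, y)` lies in it as well:
`y ∈ F x`. The one-sided limits at an interior point are limits along nontrivial filters.
-/

theorem subset_of_tendsto_of_isClosed_graph {α E : Type*} [TopologicalSpace α] [MetricSpace E]
    {F : α → NonemptyCompacts E} {s : Set α}
    (hgraph : IsClosed {p : α × E | p.1 ∈ s ∧ p.2 ∈ F p.1})
    {l : Filter α} [l.NeBot] (hs : s ∈ l) {x : α} (hlx : l ≤ 𝓝 x)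
    {G : NonemptyCompacts E} (hF : Tendsto F l (𝓝 G)) :
    (G : Set E) ⊆ F x := by
  intro y hy
  choose g hg hgdist using fun t => (F t).isCompact.exists_infDist_eq_dist (F t).nonempty y
  have hinfDist : Tendsto (fun t => infDist y (F t : Set E)) l (𝓝 0) := by
    have := ((lipschitz_infDist_set y).continuous.tendsto G).comp hF
    rwa [infDist_zero_of_mem hy] at this
  have hgy : Tendsto g l (𝓝 y) := by
    rw [tendsto_iff_dist_tendsto_zero]
    simpa only [dist_comm, ← hgdist] using hinfDist
  have hmem : ∀ᶠ t in l, (t, g t) ∈ {p : α × E | p.1 ∈ s ∧ p.2 ∈ F p.1} := by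
    filter_upwards [hs] with t ht using ⟨ht, hg t⟩
  exact (hgraph.mem_of_tendsto ((tendsto_id'.2 hlx).prodMk_nhds hgy) hmem).2

theorem stmt_8_general {d : ℕ} (a b : ℝ)
    (F : ℝ → NonemptyCompacts (EuclideanSpace ℝ (Fin d)))
    (hgraph : HasCompactGraph (fun t => (F t : Set (EuclideanSpace ℝ (Fin d)))) a b)
    (x : ℝ) (hx : x ∈ Set.Ioo a b)
    (Fm Fp : NonemptyCompacts (EuclideanSpace ℝ (Fin d)))
    (hFm : Filter.Tendsto F (nhdsWithin x (Set.Ico a x)) (nhds Fm))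
    (hFp : Filter.Tendsto F (nhdsWithin x (Set.Ioc x b)) (nhds Fp)) :
    (Fm : Set (EuclideanSpace ℝ (Fin d))) ∪ (Fp : Set (EuclideanSpace ℝ (Fin d)))
      ⊆ (F x : Set (EuclideanSpace ℝ (Fin d))) := by
  have := right_nhdsWithin_Ico_neBot hx.1
  have := left_nhdsWithin_Ioc_neBot hx.2
  have hIcc : Icc a b ∈ 𝓝 x := Icc_mem_nhds hx.1 hx.2
  rintro y (hy | hy)
  · exact subset_of_tendsto_of_isClosed_graph hgraph.isClosed
      (mem_nhdsWithin_of_mem_nhds hIcc) nhdsWithin_le_nhds hFm hy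
  · exact subset_of_tendsto_of_isClosed_graph hgraph.isClosed
      (mem_nhdsWithin_of_mem_nhds hIcc) nhdsWithin_le_nhds hFp hy

/-- for a BV set-valued function with compact graph,
`F(x-) ∪ F(x+) ⊆ F(x)`. -/
theorem stmt_8 {d : ℕ} (a b : ℝ) (hab : a < b)
    (F : ℝ → NonemptyCompacts (EuclideanSpace ℝ (Fin d)))
    (hBV : BoundedVariationOn F (Set.Icc a b))
    (hgraph : HasCompactGraph (fun t => (F t : Set (EuclideanSpace ℝ (Fin d)))) a b)
    (x : ℝ) (hx : x ∈ Set.Ioo a b)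
    (Fm Fp : NonemptyCompacts (EuclideanSpace ℝ (Fin d)))
    (hFm : Filter.Tendsto F (nhdsWithin x (Set.Ico a x)) (nhds Fm))
    (hFp : Filter.Tendsto F (nhdsWithin x (Set.Ioc x b)) (nhds Fp)) :
    (Fm : Set (EuclideanSpace ℝ (Fin d))) ∪ (Fp : Set (EuclideanSpace ℝ (Fin d)))
      ⊆ (F x : Set (EuclideanSpace ℝ (Fin d))) :=
  stmt_8_general a b F hgraph x hx Fm Fp hFm hFp
end
end

section
/- Let F : [a,b] → K(ℝ^d) be of bounded variation with compact graph, let c be a chain function of F based on a partition χ = {a = x_0 < … < x_n = b}, and suppose a ≤ α ≤ x_j < β ≤ b for some x_j ∈ χ. Then V_{α}^{x_j}(c) ≤ ω̃⁻(v_F, β, β−α+|χ|), where |χ| is the norm of the partition. -/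
open Filter Metric Topology Set TopologicalSpace

noncomputable section

/-! On `[α, x_j]` the chain function takes the values `y_k, …, y_j`, where
`x_k ≤ α < x_{k+1}`. Consecutive values form metric pairs, so
`|y_i - y_{i+1}| ≤ haus(F x_i, F x_{i+1}) ≤ v_F(x_{i+1}) - v_F(x_i)`, and telescoping gives
`V_α^{x_j}(c) ≤ v_F(x_j) - v_F(x_k) ≤ v_F(β-) - v_F(x_k)`. Since `α - |χ| ≤ x_k < β`, the
right-hand side is one of the values whose supremum is `ω̃⁻(v_F, β, β - α + |χ|)`. -/

theorem MetricPairs.edist_le_hausdorffEDist {E : Type*} [MetricSpace E] {A B : Set E}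
    {p : E × E} (hp : p ∈ MetricPairs A B) : edist p.1 p.2 ≤ hausdorffEDist A B := by
  obtain ⟨h1, h2, h3 | h3⟩ := hp
  · calc edist p.1 p.2 = ENNReal.ofReal (infEDist p.2 A).toReal := by
          rw [edist_dist, dist_comm, h3.2]; rfl
      _ ≤ infEDist p.2 A := ENNReal.ofReal_toReal_le
      _ ≤ hausdorffEDist B A := infEDist_le_hausdorffEDist_of_mem h2
      _ = hausdorffEDist A B := hausdorffEDist_comm
  · calc edist p.1 p.2 = ENNReal.ofReal (infEDist p.1 B).toReal := by
          rw [edist_dist, h3.2]; rfl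
      _ ≤ infEDist p.1 B := ENNReal.ofReal_toReal_le
      _ ≤ hausdorffEDist A B := infEDist_le_hausdorffEDist_of_mem h1

theorem eVariationOn_le_of_edist_le {α E E' : Type*} [LinearOrder α] [PseudoEMetricSpace E]
    [PseudoEMetricSpace E'] {f : α → E} {g : α → E'} {s : Set α}
    (h : ∀ x ∈ s, ∀ y ∈ s, x ≤ y → edist (f x) (f y) ≤ edist (g x) (g y)) :
    eVariationOn f s ≤ eVariationOn g s :=
  iSup_mono fun ⟨_, u, hu, hus⟩ => Finset.sum_le_sum fun i _ => by
    simpa only [edist_comm] using h _ (hus i) _ (hus (i + 1)) (hu i.le_succ)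

theorem edist_le_eVariationOn_of_forall_succ {α E E' : Type*} [LinearOrder α]
    [PseudoEMetricSpace E] [PseudoEMetricSpace E'] {n : ℕ} {x : Fin (n + 1) → α}
    (hx : Monotone x) {f : α → E'} {y : Fin (n + 1) → E}
    (hy : ∀ i : Fin n,
      edist (y i.castSucc) (y i.succ) ≤ eVariationOn f (Icc (x i.castSucc) (x i.succ)))
    {i j : Fin (n + 1)} (hij : i ≤ j) :
    edist (y i) (y j) ≤ eVariationOn f (Icc (x i) (x j)) := by
  induction j using Fin.induction with
  | zero => simp [le_antisymm hij (Fin.zero_le i)]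
  | succ k ih =>
    rcases hij.lt_or_eq with hik | rfl
    · have hik : i ≤ k.castSucc := Fin.le_castSucc_iff.2 hik
      calc edist (y i) (y k.succ)
            ≤ edist (y i) (y k.castSucc) + edist (y k.castSucc) (y k.succ) := edist_triangle _ _ _
        _ ≤ eVariationOn f (Icc (x i) (x k.castSucc)) +
              eVariationOn f (Icc (x k.castSucc) (x k.succ)) := add_le_add (ih hik) (hy k)
        _ = eVariationOn f (Icc (x i) (x k.succ)) := by
            simpa only [univ_inter] using eVariationOn.Icc_add_Icc f (s := univ) (hx hik)
              (hx k.castSucc_le_succ) (mem_univ _)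
    · simp

section varFun

variable {E : Type*} [PseudoEMetricSpace E] {f : ℝ → E} {a b : ℝ}

theorem varFun_monotoneOn (hf : BoundedVariationOn f (Icc a b)) :
    MonotoneOn (varFun f a) (Iic b) :=
  fun _ _ _ ht hst => ENNReal.toReal_mono
    (ne_top_of_le_ne_top hf (eVariationOn.mono f (Icc_subset_Icc_right ht)))
    (eVariationOn.mono f (Icc_subset_Icc_right hst))

theorem eVariationOn_Icc_eq_ofReal_varFun_sub (hf : BoundedVariationOn f (Icc a b)) {s t : ℝ}
    (has : a ≤ s) (hst : s ≤ t) (htb : t ≤ b) :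
    eVariationOn f (Icc s t) = ENNReal.ofReal (varFun f a t - varFun f a s) := by
  have hsplit := eVariationOn.Icc_add_Icc f (s := univ) has hst (mem_univ s)
  simp only [univ_inter] at hsplit
  have hfin : ∀ u v, a ≤ u → v ≤ b → eVariationOn f (Icc u v) ≠ ⊤ := fun u v hu hv =>
    ne_top_of_le_ne_top hf (eVariationOn.mono f (Icc_subset_Icc hu hv))
  rw [varFun, varFun, ← hsplit, ENNReal.toReal_add (hfin _ _ le_rfl (hst.trans htb))
    (hfin _ _ has htb), add_sub_cancel_left, ENNReal.ofReal_toReal (hfin _ _ has htb)]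

end varFun

theorem MonotoneOn.le_of_tendsto_nhdsWithin_Ico {f : ℝ → ℝ} {a β x l : ℝ}
    (hf : MonotoneOn f (Iio β)) (hax : a ≤ x) (hxβ : x < β)
    (hl : Tendsto f (𝓝[Ico a β] β) (𝓝 l)) : f x ≤ l := by
  have := right_nhdsWithin_Ico_neBot (hax.trans_lt hxβ)
  refine ge_of_tendsto hl ?_
  filter_upwards [eventually_nhdsWithin_of_eventually_nhds (eventually_gt_nhds hxβ),
    self_mem_nhdsWithin] with z hxz hz
  exact hf hxβ hz.2 hxz.le

theorem dist_le_qmodLeft {X : Type*} [PseudoMetricSpace X] {f : ℝ → X} {fl : X}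
    {a b xs δ x : ℝ} (hf : Bornology.IsBounded (f '' Icc a b))
    (hx : x ∈ Ico (xs - δ) xs ∩ Icc a b) : dist fl (f x) ≤ qmodLeft f fl a b xs δ := by
  obtain ⟨r, hr⟩ := (isBounded_iff_subset_closedBall fl).1 hf
  refine le_csSup ⟨r, ?_⟩ ⟨x, hx, rfl⟩
  rintro _ ⟨z, hz, rfl⟩
  exact mem_closedBall'.1 (hr ⟨z, hz.2, rfl⟩)

namespace IntervalPartition

variable {a b : ℝ} (χ : IntervalPartition a b)

/-- `x_{index t}` is the last partition point `≤ t`; `index t = 0` for `t < a`. -/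
def index (t : ℝ) : Fin (χ.n + 1) :=
  (Finset.univ.filter fun i => χ.pts i ≤ t).sup id

theorem le_index {i : Fin (χ.n + 1)} {t : ℝ} (h : χ.pts i ≤ t) : i ≤ χ.index t :=
  Finset.le_sup (f := id) (Finset.mem_filter.2 ⟨Finset.mem_univ i, h⟩)

theorem left_le_pts (i : Fin (χ.n + 1)) : a ≤ χ.pts i :=
  χ.first.symm.trans_le (χ.mono.monotone (Fin.zero_le i))

theorem pts_le_right (i : Fin (χ.n + 1)) : χ.pts i ≤ b :=
  (χ.mono.monotone (Fin.le_last i)).trans_eq χ.last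

theorem pts_index_le {t : ℝ} (ht : a ≤ t) : χ.pts (χ.index t) ≤ t := by
  obtain ⟨i, hi, hsup⟩ := Finset.exists_mem_eq_sup (Finset.univ.filter fun i => χ.pts i ≤ t)
    ⟨0, Finset.mem_filter.2 ⟨Finset.mem_univ _, χ.first.trans_le ht⟩⟩ id
  rw [index, hsup]
  exact (Finset.mem_filter.1 hi).2

theorem index_mono : Monotone χ.index := fun _ _ hst =>
  Finset.sup_mono fun _ hi => Finset.mem_filter.2
    ⟨Finset.mem_univ _, (Finset.mem_filter.1 hi).2.trans hst⟩

theorem index_pts (i : Fin (χ.n + 1)) : χ.index (χ.pts i) = i :=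
  le_antisymm (χ.mono.le_iff_le.1 (χ.pts_index_le (χ.left_le_pts i))) (χ.le_index le_rfl)

theorem lt_pts_succ_of_index_eq {i : Fin χ.n} {t : ℝ} (h : χ.index t = i.castSucc) :
    t < χ.pts i.succ :=
  lt_of_not_ge fun hle => (Fin.castSucc_lt_succ (i := i)).not_ge (h ▸ χ.le_index hle)

theorem sub_le_meshNorm (i : Fin χ.n) : χ.pts i.succ - χ.pts i.castSucc ≤ χ.meshNorm :=
  le_ciSup (f := fun i : Fin χ.n => χ.pts i.succ - χ.pts i.castSucc) (Finite.bddAbove_range _) i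

theorem meshNorm_nonneg : 0 ≤ χ.meshNorm :=
  Real.iSup_nonneg fun _ => sub_nonneg.2 (χ.mono Fin.castSucc_lt_succ).le

theorem sub_meshNorm_le_pts_index {t : ℝ} (ht : t ≤ b) :
    t - χ.meshNorm ≤ χ.pts (χ.index t) := by
  cases h : χ.index t using Fin.lastCases with
  | last => linarith [χ.last, χ.meshNorm_nonneg]
  | cast i => linarith [χ.lt_pts_succ_of_index_eq h, χ.sub_le_meshNorm i]

theorem apply_eq_comp_index {E : Type*} {c : ℝ → E} {y : Fin (χ.n + 1) → E}
    (hc : ∀ i : Fin χ.n, ∀ t ∈ Ico (χ.pts i.castSucc) (χ.pts i.succ), c t = y i.castSucc)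
    (hcb : c b = y (Fin.last χ.n)) {t : ℝ} (ht : t ∈ Icc a b) : c t = y (χ.index t) := by
  cases h : χ.index t using Fin.lastCases with
  | last =>
    have htb : b ≤ t := χ.last ▸ h ▸ χ.pts_index_le ht.1
    rwa [le_antisymm ht.2 htb]
  | cast i => exact hc i t ⟨h ▸ χ.pts_index_le ht.1, χ.lt_pts_succ_of_index_eq h⟩

end IntervalPartition

namespace IsChainFun

variable {E : Type*} [MetricSpace E] {F : ℝ → NonemptyCompacts E} {a b : ℝ}
  {χ : IntervalPartition a b} {c : ℝ → E}

theorem edist_le_eVariationOn (hc : IsChainFun (fun t => (F t : Set E)) χ c) {s t : ℝ}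
    (hs : s ∈ Icc a b) (ht : t ∈ Icc a b) (hst : s ≤ t) :
    edist (c s) (c t) ≤ eVariationOn F (Icc (χ.pts (χ.index s)) (χ.pts (χ.index t))) := by
  obtain ⟨y, hpair, hconst, hlast⟩ := hc
  rw [χ.apply_eq_comp_index hconst hlast hs, χ.apply_eq_comp_index hconst hlast ht]
  refine edist_le_eVariationOn_of_forall_succ χ.mono.monotone (fun i => ?_) (χ.index_mono hst)
  have hle := (χ.mono (Fin.castSucc_lt_succ (i := i))).le
  exact (MetricPairs.edist_le_hausdorffEDist (hpair i)).trans
    (eVariationOn.edist_le F (left_mem_Icc.2 hle) (right_mem_Icc.2 hle))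

theorem eVariationOn_le (hc : IsChainFun (fun t => (F t : Set E)) χ c)
    (hF : BoundedVariationOn F (Icc a b)) {s t : ℝ} (has : a ≤ s) (htb : t ≤ b) :
    eVariationOn c (Icc s t) ≤
      ENNReal.ofReal (varFun F a (χ.pts (χ.index t)) - varFun F a (χ.pts (χ.index s))) := by
  set g : ℝ → ℝ := fun u => varFun F a (χ.pts (χ.index u))
  have hg : Monotone g := fun u v huv =>
    varFun_monotoneOn hF (χ.pts_le_right _) (χ.pts_le_right _)
      (χ.mono.monotone (χ.index_mono huv))
  calc eVariationOn c (Icc s t) ≤ eVariationOn g (Icc s t) := by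
        refine eVariationOn_le_of_edist_le fun u hu v hv huv => ?_
        have hu' : u ∈ Icc a b := ⟨has.trans hu.1, hu.2.trans htb⟩
        have hv' : v ∈ Icc a b := ⟨has.trans hv.1, hv.2.trans htb⟩
        calc edist (c u) (c v)
            ≤ eVariationOn F (Icc (χ.pts (χ.index u)) (χ.pts (χ.index v))) :=
              hc.edist_le_eVariationOn hu' hv' huv
          _ = ENNReal.ofReal (g v - g u) :=
              eVariationOn_Icc_eq_ofReal_varFun_sub hF (χ.left_le_pts _)
                (χ.mono.monotone (χ.index_mono huv)) (χ.pts_le_right _)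
          _ ≤ edist (g u) (g v) := by
              rw [edist_dist, Real.dist_eq, abs_sub_comm]
              exact ENNReal.ofReal_le_ofReal (le_abs_self _)
    _ = ENNReal.ofReal (g t - g s) := by
        simpa only [univ_inter] using
          (hg.monotoneOn univ).eVariationOn_eq (mem_univ s) (mem_univ t)

end IsChainFun

theorem stmt_10_general {d : ℕ} (a b : ℝ)
    (F : ℝ → NonemptyCompacts (EuclideanSpace ℝ (Fin d)))
    (hBV : BoundedVariationOn F (Set.Icc a b))
    (χ : IntervalPartition a b) (c : ℝ → EuclideanSpace ℝ (Fin d))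
    (hc : IsChainFun (fun t => (F t : Set (EuclideanSpace ℝ (Fin d)))) χ c)
    (α β : ℝ) (j : Fin (χ.n + 1))
    (hα : a ≤ α) (hαj : α ≤ χ.pts j) (hjβ : χ.pts j < β) (hβ : β ≤ b)
    (vl : ℝ)
    (hvl : Filter.Tendsto (fun x => varFun F a x) (nhdsWithin β (Set.Ico a β)) (nhds vl)) :
    (eVariationOn c (Set.Icc α (χ.pts j))).toReal ≤
      qmodLeft (fun x => varFun F a x) vl a b β (β - α + χ.meshNorm) := by
  set xk := χ.pts (χ.index α)
  have hxk_le : xk ≤ χ.pts j := (χ.pts_index_le hα).trans hαj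
  have hvar := hc.eVariationOn_le hBV hα (χ.pts_le_right j)
  rw [χ.index_pts] at hvar
  have hV : MonotoneOn (varFun F a) (Iic b) := varFun_monotoneOn hBV
  have hVj : varFun F a (χ.pts j) ≤ vl :=
    (hV.mono (Iio_subset_Iic_self.trans (Iic_subset_Iic.2 hβ))).le_of_tendsto_nhdsWithin_Ico
      (χ.left_le_pts j) hjβ hvl
  have hxk : xk ∈ Ico (β - (β - α + χ.meshNorm)) β ∩ Icc a b := by
    refine ⟨⟨?_, hxk_le.trans_lt hjβ⟩, χ.left_le_pts _, χ.pts_le_right _⟩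
    linarith [χ.sub_meshNorm_le_pts_index (hαj.trans (χ.pts_le_right j))]
  have hbdd : Bornology.IsBounded (varFun F a '' Icc a b) :=
    (isBounded_Icc 0 (varFun F a b)).subset <| image_subset_iff.2 fun t ht =>
      ⟨ENNReal.toReal_nonneg, hV ht.2 (mem_Iic.2 le_rfl) ht.2⟩
  calc (eVariationOn c (Icc α (χ.pts j))).toReal ≤ varFun F a (χ.pts j) - varFun F a xk :=
        ENNReal.toReal_le_of_le_ofReal
          (sub_nonneg.2 (hV (χ.pts_le_right _) (χ.pts_le_right j) hxk_le)) hvar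
    _ ≤ dist vl (varFun F a xk) := by
        rw [Real.dist_eq]
        linarith [le_abs_self (vl - varFun F a xk)]
    _ ≤ qmodLeft (fun x => varFun F a x) vl a b β (β - α + χ.meshNorm) :=
        dist_le_qmodLeft hbdd hxk

/-- for a chain function `c` of `F` based on `χ` and `a ≤ α ≤ x_j < β ≤ b`,
`V_α^{x_j}(c) ≤ ω̃⁻(v_F, β, β - α + |χ|)`. -/
theorem stmt_10 {d : ℕ} (a b : ℝ) (hab : a < b)
    (F : ℝ → NonemptyCompacts (EuclideanSpace ℝ (Fin d)))
    (hBV : BoundedVariationOn F (Set.Icc a b))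
    (hgraph : HasCompactGraph (fun t => (F t : Set (EuclideanSpace ℝ (Fin d)))) a b)
    (χ : IntervalPartition a b) (c : ℝ → EuclideanSpace ℝ (Fin d))
    (hc : IsChainFun (fun t => (F t : Set (EuclideanSpace ℝ (Fin d)))) χ c)
    (α β : ℝ) (j : Fin (χ.n + 1))
    (hα : a ≤ α) (hαj : α ≤ χ.pts j) (hjβ : χ.pts j < β) (hβ : β ≤ b)
    (vl : ℝ)
    (hvl : Filter.Tendsto (fun x => varFun F a x) (nhdsWithin β (Set.Ico a β)) (nhds vl)) :
    (eVariationOn c (Set.Icc α (χ.pts j))).toReal ≤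
      qmodLeft (fun x => varFun F a x) vl a b β (β - α + χ.meshNorm) :=
  stmt_10_general a b F hBV χ c hc α β j hα hαj hjβ hβ vl hvl
end
end

section
/- Let F : [a,b] → K(ℝ^d) be of bounded variation with compact graph, satisfying at a discontinuity point ξ ∈ (a,b) both Property 1 (F(ξ) = F(ξ−) ∪ F(ξ+)) and Property 2. Then A_F(ξ) ⊆ (1/2)F(ξ−) ⊕ (1/2)F(ξ+), i.e., for every metric selection s of F, the pair (s(ξ−), s(ξ+)) is a metric pair of (F(ξ−), F(ξ+)). -/
open Filter Metric Topology Set TopologicalSpace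

noncomputable section

/-!
Let `c_k` be chain functions converging pointwise to `s`. Consecutive values of a chain function
form metric pairs, hence are no farther apart than the Hausdorff distance of the corresponding
values of `F`; so two values of `c_k` at partition points differ by at most the variation of `F`
between them. As the variation of `F` on small one-sided neighbourhoods of `ξ` tends to `0`, the
values of `c_k` at the partition points adjacent to `ξ` converge to `s(ξ-)` and `s(ξ+)`.

If `ξ` is interior to its cell, the values at the two ends of that cell form a metric pair, and
metric pairs are closed under Hausdorff limits, giving `(s(ξ-), s(ξ+)) ∈ Π(F(ξ-), F(ξ+))`. If `ξ`
is a partition point, one gets `(s(ξ-), s(ξ)) ∈ Π(F(ξ-), F(ξ))` and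
`(s(ξ), s(ξ+)) ∈ Π(F(ξ), F(ξ+))` instead; by Property 1, `s(ξ)` lies in `F(ξ-)` or in `F(ξ+)`,
which forces it to equal `s(ξ-)`, respectively `s(ξ+)`, and the other pair restricts to the claim.
-/

section MetricPairs

variable {E : Type*} [MetricSpace E]

theorem isClosed_setOf_mem_nonemptyCompacts {X : Type*} [TopologicalSpace X] {f : X → E}
    {g : X → NonemptyCompacts E} (hf : Continuous f) (hg : Continuous g) :
    IsClosed {x | f x ∈ (g x : Set E)} := by
  have h : {x | f x ∈ (g x : Set E)} = (fun x => infDist (f x) (g x : Set E)) ⁻¹' {0} := by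
    ext x
    exact (g x).isCompact.isClosed.mem_iff_infDist_zero (g x).nonempty
  rw [h]
  exact isClosed_singleton.preimage ((lipschitz_infDist (α := E)).continuous.comp₂ hf hg)

theorem isClosed_setOf_mem_metricPairs {X : Type*} [TopologicalSpace X] {u v : X → E}
    {A B : X → NonemptyCompacts E} (hu : Continuous u) (hv : Continuous v)
    (hA : Continuous A) (hB : Continuous B) :
    IsClosed {x | (u x, v x) ∈ MetricPairs (A x : Set E) (B x : Set E)} := by
  have hdA : Continuous fun x => infDist (v x) (A x : Set E) :=
    (lipschitz_infDist (α := E)).continuous.comp₂ hv hA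
  have hdB : Continuous fun x => infDist (u x) (B x : Set E) :=
    (lipschitz_infDist (α := E)).continuous.comp₂ hu hB
  have huA := isClosed_setOf_mem_nonemptyCompacts hu hA
  have hvB := isClosed_setOf_mem_nonemptyCompacts hv hB
  simp only [MetricPairs, metricProj, ofPred_and, ofPred_or]
  exact huA.inter (hvB.inter ((huA.inter (isClosed_eq (hv.dist hu) hdA)).union
    (hvB.inter (isClosed_eq (hu.dist hv) hdB))))

theorem mem_metricPairs_of_tendsto_s16 {ι : Type*} {l : Filter ι}
    {A B : ι → NonemptyCompacts E} {u v : ι → E} {A₀ B₀ : NonemptyCompacts E} {x y : E}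
    (hA : Tendsto A l (𝓝 A₀)) (hB : Tendsto B l (𝓝 B₀))
    (hu : Tendsto u l (𝓝 x)) (hv : Tendsto v l (𝓝 y))
    (h : ∃ᶠ i in l, (u i, v i) ∈ MetricPairs (A i : Set E) (B i : Set E)) :
    (x, y) ∈ MetricPairs (A₀ : Set E) (B₀ : Set E) := by
  have hclosed := isClosed_setOf_mem_metricPairs
    (X := (E × E) × (NonemptyCompacts E × NonemptyCompacts E))
    (u := fun q => q.1.1) (v := fun q => q.1.2) (A := fun q => q.2.1) (B := fun q => q.2.2)
    (by fun_prop) (by fun_prop) (by fun_prop) (by fun_prop)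
  exact hclosed.mem_of_frequently_of_tendsto h
    ((hu.prodMk_nhds hv).prodMk_nhds (hA.prodMk_nhds hB))

theorem edist_le_of_mem_metricPairs {A B : NonemptyCompacts E} {u v : E}
    (h : (u, v) ∈ MetricPairs (A : Set E) (B : Set E)) : edist u v ≤ edist A B := by
  rw [edist_dist, edist_dist]
  refine ENNReal.ofReal_le_ofReal ?_
  rcases h with ⟨hu, hv, ⟨-, hd⟩ | ⟨-, hd⟩⟩
  · rw [dist_comm u, hd, dist_comm A]
    exact infDist_le_hausdorffDist_of_mem hv (edist_ne_top B A)
  · rw [hd]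
    exact infDist_le_hausdorffDist_of_mem hu (edist_ne_top A B)

theorem eq_of_mem_metricPairs_of_mem_swap {A B : Set E} {x y : E}
    (h : (x, y) ∈ MetricPairs A B) (hx : x ∈ B) (hy : y ∈ A) : x = y := by
  rcases h with ⟨-, -, ⟨-, hd⟩ | ⟨-, hd⟩⟩
  · exact (dist_eq_zero.1 (hd.trans (infDist_zero_of_mem hy))).symm
  · exact dist_eq_zero.1 (hd.trans (infDist_zero_of_mem hx))

theorem mem_metricPairs_of_subset_left {A A' B : Set E} {x y : E}
    (h : (x, y) ∈ MetricPairs A' B) (hA : A ⊆ A') (hx : x ∈ A) :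
    (x, y) ∈ MetricPairs A B := by
  obtain ⟨-, hy, ⟨-, hd⟩ | hproj⟩ := h
  · refine ⟨hx, hy, Or.inl ⟨hx, le_antisymm ?_ (infDist_le_dist_of_mem hx)⟩⟩
    exact hd.le.trans (infDist_le_infDist_of_subset hA ⟨x, hx⟩)
  · exact ⟨hx, hy, Or.inr hproj⟩

theorem mem_metricPairs_of_subset_right {A B B' : Set E} {x y : E}
    (h : (x, y) ∈ MetricPairs A B') (hB : B ⊆ B') (hy : y ∈ B) :
    (x, y) ∈ MetricPairs A B := by
  obtain ⟨hx, -, hproj | ⟨-, hd⟩⟩ := h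
  · exact ⟨hx, hy, Or.inl hproj⟩
  · refine ⟨hx, hy, Or.inr ⟨hy, le_antisymm ?_ (infDist_le_dist_of_mem hy)⟩⟩
    exact hd.le.trans (infDist_le_infDist_of_subset hB ⟨y, hy⟩)

theorem mem_metricPairs_of_eq_union {A B C : Set E} (hC : C = A ∪ B) {x u y : E}
    (hxu : (x, u) ∈ MetricPairs A C) (huy : (u, y) ∈ MetricPairs C B) :
    (x, y) ∈ MetricPairs A B := by
  subst hC
  rcases huy.1 with hu | hu
  · obtain rfl : x = u := eq_of_mem_metricPairs_of_mem_swap hxu (Or.inl hxu.1) hu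
    exact mem_metricPairs_of_subset_left huy subset_union_left hxu.1
  · obtain rfl : u = y := eq_of_mem_metricPairs_of_mem_swap huy hu (Or.inr huy.2.1)
    exact mem_metricPairs_of_subset_right hxu subset_union_right huy.2.1

end MetricPairs

theorem tendsto_nhdsWithin_of_dist_le {X ι : Type*} [PseudoMetricSpace X] {l : Filter ι}
    {x : ι → X} {δ : ι → ℝ} {S : Set X} {x₀ : X} (hS : ∀ k, x k ∈ S)
    (hδ : Tendsto δ l (𝓝 0)) (hx : ∀ k, dist (x k) x₀ ≤ δ k) :
    Tendsto x l (𝓝[S] x₀) :=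
  tendsto_nhdsWithin_iff.2
    ⟨tendsto_iff_dist_tendsto_zero.2 (squeeze_zero (fun _ => dist_nonneg) hx hδ),
      Eventually.of_forall hS⟩

namespace IntervalPartition

variable {a b : ℝ} (χ : IntervalPartition a b)

theorem pts_mem_Icc (i : Fin (χ.n + 1)) : χ.pts i ∈ Icc a b :=
  ⟨by simpa [χ.first] using χ.mono.monotone (Fin.zero_le i),
    by simpa [χ.last] using χ.mono.monotone (Fin.le_last i)⟩

theorem exists_mem_Ico {t : ℝ} (ht : t ∈ Ico a b) :
    ∃ i : Fin χ.n, t ∈ Ico (χ.pts i.castSucc) (χ.pts i.succ) := by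
  by_contra! h
  have hle : ∀ m, χ.pts m ≤ t := by
    intro m
    induction m using Fin.induction with
    | zero => rw [χ.first]; exact ht.1
    | succ i ih => exact not_lt.1 fun hlt => h i ⟨ih, hlt⟩
  exact (hle (Fin.last _)).not_gt (by rw [χ.last]; exact ht.2)

theorem exists_mem_Ioc {t : ℝ} (ht : t ∈ Ioc a b) :
    ∃ i : Fin χ.n, t ∈ Ioc (χ.pts i.castSucc) (χ.pts i.succ) := by
  by_contra! h
  have hle : ∀ m, t ≤ χ.pts m := by
    intro m
    induction m using Fin.reverseInduction with
    | last => rw [χ.last]; exact ht.2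
    | cast i ih => exact not_lt.1 fun hlt => h i ⟨hlt, ih⟩
  exact (hle 0).not_gt (by rw [χ.first]; exact ht.1)

theorem le_of_pts_castSucc_lt_pts_succ {i j : Fin χ.n}
    (h : χ.pts i.castSucc < χ.pts j.succ) : i ≤ j :=
  Fin.castSucc_lt_succ_iff.1 (χ.mono.lt_iff_lt.1 h)

theorem eq_of_mem_Ioc_of_mem_Ioo {i j : Fin χ.n} {t : ℝ}
    (hi : t ∈ Ioc (χ.pts i.castSucc) (χ.pts i.succ))
    (hj : t ∈ Ioo (χ.pts j.castSucc) (χ.pts j.succ)) : i = j :=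
  le_antisymm (χ.le_of_pts_castSucc_lt_pts_succ (hi.1.trans hj.2))
    (χ.le_of_pts_castSucc_lt_pts_succ (hj.1.trans_le hi.2))

theorem succ_eq_castSucc_of_pts_eq {i j : Fin χ.n} {t : ℝ}
    (hi : t ∈ Ioc (χ.pts i.castSucc) (χ.pts i.succ)) (hj : χ.pts j.castSucc = t) :
    i.succ = j.castSucc :=
  le_antisymm
    (Fin.succ_le_castSucc_iff.2 (Fin.castSucc_lt_castSucc_iff.1 (χ.mono.lt_iff_lt.1 (hj ▸ hi.1))))
    (χ.mono.le_iff_le.1 (hj ▸ hi.2))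

end IntervalPartition

section AdjacentPoints

variable {a b ξ : ℝ} {χ : ℕ → IntervalPartition a b}

theorem tendsto_pts_castSucc_nhdsWithin_Ico
    (hmesh : Tendsto (fun k => (χ k).meshNorm) atTop (𝓝 0)) {i : ∀ k, Fin (χ k).n}
    (hi : ∀ k, ξ ∈ Ioc ((χ k).pts (i k).castSucc) ((χ k).pts (i k).succ)) :
    Tendsto (fun k => (χ k).pts (i k).castSucc) atTop (𝓝[Ico a ξ] ξ) :=
  tendsto_nhdsWithin_of_dist_le (fun k => ⟨((χ k).pts_mem_Icc _).1, (hi k).1⟩) hmesh fun k => by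
    rw [Real.dist_eq, abs_of_neg (sub_neg.2 (hi k).1)]
    linarith [(χ k).sub_le_meshNorm (i k), (hi k).2]

theorem tendsto_pts_succ_nhdsWithin_Ioc
    (hmesh : Tendsto (fun k => (χ k).meshNorm) atTop (𝓝 0)) {j : ∀ k, Fin (χ k).n}
    (hj : ∀ k, ξ ∈ Ico ((χ k).pts (j k).castSucc) ((χ k).pts (j k).succ)) :
    Tendsto (fun k => (χ k).pts (j k).succ) atTop (𝓝[Ioc ξ b] ξ) :=
  tendsto_nhdsWithin_of_dist_le (fun k => ⟨(hj k).2, ((χ k).pts_mem_Icc _).2⟩) hmesh fun k => by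
    rw [Real.dist_eq, abs_of_pos (sub_pos.2 (hj k).2)]
    linarith [(χ k).sub_le_meshNorm (j k), (hj k).1]

end AdjacentPoints

section ChainFun

variable {E : Type*} [MetricSpace E] {a b : ℝ} {χ : IntervalPartition a b} {c : ℝ → E}

theorem IsChainFun.apply_eq_of_mem_Ico {F : ℝ → Set E} (hc : IsChainFun F χ c) {i : Fin χ.n}
    {t : ℝ} (ht : t ∈ Ico (χ.pts i.castSucc) (χ.pts i.succ)) :
    c t = c (χ.pts i.castSucc) := by
  obtain ⟨y, -, hconst, -⟩ := hc
  rw [hconst i t ht, hconst i _ ⟨le_rfl, χ.mono Fin.castSucc_lt_succ⟩]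

theorem IsChainFun.mem_metricPairs {F : ℝ → Set E} (hc : IsChainFun F χ c) (i : Fin χ.n) :
    (c (χ.pts i.castSucc), c (χ.pts i.succ)) ∈
      MetricPairs (F (χ.pts i.castSucc)) (F (χ.pts i.succ)) := by
  obtain ⟨y, hpair, hconst, hlast⟩ := hc
  have hy : ∀ m, c (χ.pts m) = y m := by
    intro m
    cases m using Fin.lastCases with
    | last => rw [χ.last]; exact hlast
    | cast j => exact hconst j _ ⟨le_rfl, χ.mono Fin.castSucc_lt_succ⟩
  rw [hy, hy]
  exact hpair i

theorem IsChainFun.edist_le_eVariationOn_s16 {F : ℝ → NonemptyCompacts E}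
    (hc : IsChainFun (fun t => (F t : Set E)) χ c) {m m' : Fin (χ.n + 1)} (h : m ≤ m') :
    edist (c (χ.pts m)) (c (χ.pts m')) ≤ eVariationOn F (Icc (χ.pts m) (χ.pts m')) := by
  induction m' using Fin.induction with
  | zero => simp [Fin.le_zero_iff.1 h]
  | succ i ih =>
    rcases h.eq_or_lt with rfl | hlt
    · simp
    have hm : m ≤ i.castSucc := Fin.le_castSucc_iff.2 hlt
    have hstep : χ.pts i.castSucc ≤ χ.pts i.succ := (χ.mono Fin.castSucc_lt_succ).le
    calc edist (c (χ.pts m)) (c (χ.pts i.succ))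
        ≤ edist (c (χ.pts m)) (c (χ.pts i.castSucc))
          + edist (c (χ.pts i.castSucc)) (c (χ.pts i.succ)) := edist_triangle _ _ _
      _ ≤ eVariationOn F (Icc (χ.pts m) (χ.pts i.castSucc))
          + eVariationOn F (Icc (χ.pts i.castSucc) (χ.pts i.succ)) := by
        gcongr
        · exact ih hm
        · exact (edist_le_of_mem_metricPairs (hc.mem_metricPairs i)).trans
            (eVariationOn.edist_le F (left_mem_Icc.2 hstep) (right_mem_Icc.2 hstep))
      _ = eVariationOn F (Icc (χ.pts m) (χ.pts i.succ)) := by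
        simpa using eVariationOn.Icc_add_Icc F (s := univ) (χ.mono.monotone hm) hstep
          (mem_univ _)

end ChainFun

section OneSidedLimits

variable {E : Type*} [MetricSpace E] {F : ℝ → NonemptyCompacts E} {a b ξ : ℝ}
  {χ : ℕ → IntervalPartition a b} {c : ℕ → ℝ → E} {s : ℝ → E} {idx : ∀ k, Fin ((χ k).n + 1)}

theorem tendsto_chainFun_pts_left (hBV : BoundedVariationOn F (Icc a b)) (hξ : ξ ≤ b)
    (hc : ∀ k, IsChainFun (fun t => (F t : Set E)) (χ k) (c k))
    (hmesh : Tendsto (fun k => (χ k).meshNorm) atTop (𝓝 0))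
    (hconv : ∀ t ∈ Icc a b, Tendsto (fun k => c k t) atTop (𝓝 (s t)))
    {sm : E} (hsm : Tendsto s (𝓝[Ico a ξ] ξ) (𝓝 sm))
    (hidx : Tendsto (fun k => (χ k).pts (idx k)) atTop (𝓝[Ico a ξ] ξ)) :
    Tendsto (fun k => c k ((χ k).pts (idx k))) atTop (𝓝 sm) := by
  have : (𝓝[Ico a ξ] ξ).NeBot := hidx.neBot
  refine EMetric.tendsto_nhds.2 fun ε hε => ?_
  have hε3 : 0 < ε / 3 := ENNReal.div_pos hε.ne' ENNReal.ofNat_ne_top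
  obtain ⟨t₀, hvar, ht₀⟩ : ∃ t₀, eVariationOn F (Icc a b ∩ Ico t₀ ξ) < ε / 3 ∧ t₀ ∈ Ico a ξ :=
    ((((hBV.tendsto_eVariationOn_Ico_zero ξ).eventually (gt_mem_nhds hε3)).filter_mono
      (nhdsWithin_mono _ (Ico_subset_Icc_self.trans (Icc_subset_Icc_right hξ)))).and
      self_mem_nhdsWithin).exists
  obtain ⟨t, hst, ht₀t, ht⟩ : ∃ t, edist (s t) sm < ε / 3 ∧ t₀ < t ∧ t ∈ Ico a ξ :=
    ((EMetric.tendsto_nhds.1 hsm _ hε3).and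
      ((eventually_nhdsWithin_of_eventually_nhds (eventually_gt_nhds ht₀.2)).and
        self_mem_nhdsWithin)).exists
  have hk : ∀ᶠ k in atTop, (χ k).meshNorm < t - t₀ ∧ edist (c k t) (s t) < ε / 3 ∧
      (χ k).pts (idx k) ∈ Ico a ξ ∩ Ioi t :=
    (hmesh.eventually (gt_mem_nhds (sub_pos.2 ht₀t))).and
      ((EMetric.tendsto_nhds.1 (hconv t ⟨ht.1, ht.2.le.trans hξ⟩) _ hε3).and
      (hidx (inter_mem_nhdsWithin _ (Ioi_mem_nhds ht.2))))
  filter_upwards [hk] with k ⟨hk_mesh, hk_conv, hk_idx, ht_idx⟩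
  obtain ⟨m, hm⟩ := (χ k).exists_mem_Ico ⟨ht.1, ht.2.trans_le hξ⟩
  rw [(hc k).apply_eq_of_mem_Ico hm] at hk_conv
  have hm_idx : m.castSucc ≤ idx k := (χ k).mono.le_iff_le.1 (hm.1.trans (le_of_lt ht_idx))
  have hcell := (χ k).sub_le_meshNorm m
  have hvar_k : edist (c k ((χ k).pts (idx k))) (c k ((χ k).pts m.castSucc)) < ε / 3 := by
    rw [edist_comm]
    refine ((hc k).edist_le_eVariationOn_s16 hm_idx).trans_lt
      (lt_of_le_of_lt (eVariationOn.mono F fun x hx => ?_) hvar)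
    exact ⟨⟨((χ k).pts_mem_Icc _).1.trans hx.1, hx.2.trans ((χ k).pts_mem_Icc _).2⟩,
      by linarith [hx.1, hm.2], hx.2.trans_lt hk_idx.2⟩
  calc edist (c k ((χ k).pts (idx k))) sm
      ≤ edist (c k ((χ k).pts (idx k))) (c k ((χ k).pts m.castSucc))
        + edist (c k ((χ k).pts m.castSucc)) (s t) + edist (s t) sm := edist_triangle4 _ _ _ _
    _ < ε / 3 + ε / 3 + ε / 3 := ENNReal.add_lt_add (ENNReal.add_lt_add hvar_k hk_conv) hst
    _ = ε := ENNReal.add_thirds ε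

theorem tendsto_chainFun_pts_right (hBV : BoundedVariationOn F (Icc a b)) (hξ : a ≤ ξ)
    (hc : ∀ k, IsChainFun (fun t => (F t : Set E)) (χ k) (c k))
    (hconv : ∀ t ∈ Icc a b, Tendsto (fun k => c k t) atTop (𝓝 (s t)))
    {sp : E} (hsp : Tendsto s (𝓝[Ioc ξ b] ξ) (𝓝 sp))
    (hidx : Tendsto (fun k => (χ k).pts (idx k)) atTop (𝓝[Ioc ξ b] ξ)) :
    Tendsto (fun k => c k ((χ k).pts (idx k))) atTop (𝓝 sp) := by
  have : (𝓝[Ioc ξ b] ξ).NeBot := hidx.neBot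
  refine EMetric.tendsto_nhds.2 fun ε hε => ?_
  have hε3 : 0 < ε / 3 := ENNReal.div_pos hε.ne' ENNReal.ofNat_ne_top
  obtain ⟨t₁, hvar, ht₁⟩ : ∃ t₁, eVariationOn F (Icc a b ∩ Ioc ξ t₁) < ε / 3 ∧ t₁ ∈ Ioc ξ b :=
    ((((hBV.tendsto_eVariationOn_Ioc_zero ξ).eventually (gt_mem_nhds hε3)).filter_mono
      (nhdsWithin_mono _ (Ioc_subset_Icc_self.trans (Icc_subset_Icc_left hξ)))).and
      self_mem_nhdsWithin).exists
  obtain ⟨t, hst, ht_t₁, ht⟩ : ∃ t, edist (s t) sp < ε / 3 ∧ t < t₁ ∧ t ∈ Ioc ξ b :=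
    ((EMetric.tendsto_nhds.1 hsp _ hε3).and
      ((eventually_nhdsWithin_of_eventually_nhds (eventually_lt_nhds ht₁.1)).and
        self_mem_nhdsWithin)).exists
  have hk : ∀ᶠ k in atTop, edist (c k t) (s t) < ε / 3 ∧ (χ k).pts (idx k) ∈ Ioc ξ b ∩ Iio t :=
    (EMetric.tendsto_nhds.1 (hconv t ⟨hξ.trans ht.1.le, ht.2⟩) _ hε3).and
      (hidx (inter_mem_nhdsWithin _ (Iio_mem_nhds ht.1)))
  filter_upwards [hk] with k ⟨hk_conv, hk_idx, hidx_t⟩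
  obtain ⟨m, hm⟩ := (χ k).exists_mem_Ico ⟨hξ.trans ht.1.le, ht_t₁.trans_le ht₁.2⟩
  rw [(hc k).apply_eq_of_mem_Ico hm] at hk_conv
  have hidx_m : idx k ≤ m.castSucc :=
    Fin.le_castSucc_iff.2 ((χ k).mono.lt_iff_lt.1 ((mem_Iio.1 hidx_t).trans hm.2))
  have hvar_k : edist (c k ((χ k).pts (idx k))) (c k ((χ k).pts m.castSucc)) < ε / 3 := by
    refine ((hc k).edist_le_eVariationOn_s16 hidx_m).trans_lt
      (lt_of_le_of_lt (eVariationOn.mono F fun x hx => ?_) hvar)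
    exact ⟨⟨((χ k).pts_mem_Icc _).1.trans hx.1, hx.2.trans ((χ k).pts_mem_Icc _).2⟩,
      hk_idx.1.trans_le hx.1, hx.2.trans (hm.1.trans ht_t₁.le)⟩
  calc edist (c k ((χ k).pts (idx k))) sp
      ≤ edist (c k ((χ k).pts (idx k))) (c k ((χ k).pts m.castSucc))
        + edist (c k ((χ k).pts m.castSucc)) (s t) + edist (s t) sp := edist_triangle4 _ _ _ _
    _ < ε / 3 + ε / 3 + ε / 3 := ENNReal.add_lt_add (ENNReal.add_lt_add hvar_k hk_conv) hst
    _ = ε := ENNReal.add_thirds ε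

end OneSidedLimits

theorem mem_metricPairs_of_isMetricSelection {E : Type*} [MetricSpace E]
    {F : ℝ → NonemptyCompacts E} {a b ξ : ℝ} (hξ : ξ ∈ Ioo a b)
    (hBV : BoundedVariationOn F (Icc a b)) {Fm Fp : NonemptyCompacts E}
    (hFm : Tendsto F (𝓝[Ico a ξ] ξ) (𝓝 Fm)) (hFp : Tendsto F (𝓝[Ioc ξ b] ξ) (𝓝 Fp))
    (hP1 : (F ξ : Set E) = (Fm : Set E) ∪ (Fp : Set E)) {s : ℝ → E} {sm sp : E}
    (hs : IsMetricSelection (fun t => (F t : Set E)) a b s)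
    (hsm : Tendsto s (𝓝[Ico a ξ] ξ) (𝓝 sm)) (hsp : Tendsto s (𝓝[Ioc ξ b] ξ) (𝓝 sp)) :
    (sm, sp) ∈ MetricPairs (Fm : Set E) (Fp : Set E) := by
  obtain ⟨-, χ, c, hc, hmesh, hconv⟩ := hs
  choose i hi using fun k => (χ k).exists_mem_Ioc ⟨hξ.1, hξ.2.le⟩
  choose j hj using fun k => (χ k).exists_mem_Ico ⟨hξ.1.le, hξ.2⟩
  have hi_left := tendsto_pts_castSucc_nhdsWithin_Ico hmesh hi
  have hj_right := tendsto_pts_succ_nhdsWithin_Ioc hmesh hj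
  have hc_left := tendsto_chainFun_pts_left hBV hξ.2.le hc hmesh hconv hsm hi_left
  have hc_right := tendsto_chainFun_pts_right hBV hξ.1.le hc hconv hsp hj_right
  by_cases hinterior : ∃ᶠ k in atTop, (χ k).pts (j k).castSucc < ξ
  · refine mem_metricPairs_of_tendsto_s16 (hFm.comp hi_left) (hFp.comp hj_right) hc_left hc_right
      (hinterior.mono fun k hk => ?_)
    simp only [Function.comp_apply]
    rw [← (χ k).eq_of_mem_Ioc_of_mem_Ioo (hi k) ⟨hk, (hj k).2⟩]
    exact (hc k).mem_metricPairs (i k)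
  have hpt : ∀ᶠ k in atTop, (χ k).pts (j k).castSucc = ξ :=
    (not_frequently.1 hinterior).mono fun k hk => le_antisymm (hj k).1 (not_lt.1 hk)
  have hF_pt : Tendsto (fun k => F ((χ k).pts (j k).castSucc)) atTop (𝓝 (F ξ)) :=
    tendsto_const_nhds.congr' (hpt.mono fun k hk => congrArg F hk.symm)
  have hc_pt : Tendsto (fun k => c k ((χ k).pts (j k).castSucc)) atTop (𝓝 (s ξ)) :=
    (hconv ξ (Ioo_subset_Icc_self hξ)).congr fun k => (hc k).apply_eq_of_mem_Ico (hj k)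
  have hleft : (sm, s ξ) ∈ MetricPairs (Fm : Set E) (F ξ : Set E) := by
    refine mem_metricPairs_of_tendsto_s16 (hFm.comp hi_left) hF_pt hc_left hc_pt
      (hpt.mono fun k hk => ?_).frequently
    simp only [Function.comp_apply]
    rw [← (χ k).succ_eq_castSucc_of_pts_eq (hi k) hk]
    exact (hc k).mem_metricPairs (i k)
  have hright : (s ξ, sp) ∈ MetricPairs (F ξ : Set E) (Fp : Set E) :=
    mem_metricPairs_of_tendsto_s16 hF_pt (hFp.comp hj_right) hc_pt hc_right
      (Frequently.of_forall fun k => (hc k).mem_metricPairs (j k))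
  exact mem_metricPairs_of_eq_union hP1 hleft hright

theorem stmt_16_general {d : ℕ} (a b : ℝ)
    (F : ℝ → NonemptyCompacts (EuclideanSpace ℝ (Fin d)))
    (hBV : BoundedVariationOn F (Set.Icc a b))
    (ξ : ℝ) (hξ : ξ ∈ Set.Ioo a b)
    (Fm Fp : NonemptyCompacts (EuclideanSpace ℝ (Fin d)))
    (hFm : Filter.Tendsto F (nhdsWithin ξ (Set.Ico a ξ)) (nhds Fm))
    (hFp : Filter.Tendsto F (nhdsWithin ξ (Set.Ioc ξ b)) (nhds Fp))
    (hP1 : (F ξ : Set (EuclideanSpace ℝ (Fin d))) =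
      (Fm : Set (EuclideanSpace ℝ (Fin d))) ∪ (Fp : Set (EuclideanSpace ℝ (Fin d)))) :
    (∀ (s : ℝ → EuclideanSpace ℝ (Fin d)) (sm sp : EuclideanSpace ℝ (Fin d)),
      IsMetricSelection (fun t => (F t : Set (EuclideanSpace ℝ (Fin d)))) a b s →
      Filter.Tendsto s (nhdsWithin ξ (Set.Ico a ξ)) (nhds sm) →
      Filter.Tendsto s (nhdsWithin ξ (Set.Ioc ξ b)) (nhds sp) →
      (sm, sp) ∈ MetricPairs (Fm : Set (EuclideanSpace ℝ (Fin d)))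
        (Fp : Set (EuclideanSpace ℝ (Fin d)))) ∧
    limitSet (fun t => (F t : Set (EuclideanSpace ℝ (Fin d)))) a b ξ ⊆
      metricAvg (Fm : Set (EuclideanSpace ℝ (Fin d)))
        (Fp : Set (EuclideanSpace ℝ (Fin d))) := by
  refine ⟨fun s sm sp => mem_metricPairs_of_isMetricSelection hξ hBV hFm hFp hP1, ?_⟩
  rintro v ⟨s, sm, sp, hs, hsm, hsp, rfl⟩
  exact ⟨(sm, sp), mem_metricPairs_of_isMetricSelection hξ hBV hFm hFp hP1 hs hsm hsp, rfl⟩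

/-- under Properties 1 and 2 at a discontinuity point `ξ`,
`A_F(ξ) ⊆ (1/2)F(ξ-) ⊕ (1/2)F(ξ+)`: for every metric selection `s`, the pair
`(s(ξ-), s(ξ+))` is a metric pair of `(F(ξ-), F(ξ+))`. -/
theorem stmt_16 {d : ℕ} (a b : ℝ) (hab : a < b)
    (F : ℝ → NonemptyCompacts (EuclideanSpace ℝ (Fin d)))
    (hBV : BoundedVariationOn F (Set.Icc a b))
    (hgraph : HasCompactGraph (fun t => (F t : Set (EuclideanSpace ℝ (Fin d)))) a b)
    (ξ : ℝ) (hξ : ξ ∈ Set.Ioo a b)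
    (hdisc : ¬ ContinuousWithinAt F (Set.Icc a b) ξ)
    (Fm Fp : NonemptyCompacts (EuclideanSpace ℝ (Fin d)))
    (hFm : Filter.Tendsto F (nhdsWithin ξ (Set.Ico a ξ)) (nhds Fm))
    (hFp : Filter.Tendsto F (nhdsWithin ξ (Set.Ioc ξ b)) (nhds Fp))
    (hP1 : (F ξ : Set (EuclideanSpace ℝ (Fin d))) =
      (Fm : Set (EuclideanSpace ℝ (Fin d))) ∪ (Fp : Set (EuclideanSpace ℝ (Fin d))))
    (hP2 : Property2 (fun t => (F t : Set (EuclideanSpace ℝ (Fin d)))) a b ξ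
      (Fm : Set (EuclideanSpace ℝ (Fin d))) (Fp : Set (EuclideanSpace ℝ (Fin d)))) :
    (∀ (s : ℝ → EuclideanSpace ℝ (Fin d)) (sm sp : EuclideanSpace ℝ (Fin d)),
      IsMetricSelection (fun t => (F t : Set (EuclideanSpace ℝ (Fin d)))) a b s →
      Filter.Tendsto s (nhdsWithin ξ (Set.Ico a ξ)) (nhds sm) →
      Filter.Tendsto s (nhdsWithin ξ (Set.Ioc ξ b)) (nhds sp) →
      (sm, sp) ∈ MetricPairs (Fm : Set (EuclideanSpace ℝ (Fin d)))
        (Fp : Set (EuclideanSpace ℝ (Fin d)))) ∧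
    limitSet (fun t => (F t : Set (EuclideanSpace ℝ (Fin d)))) a b ξ ⊆
      metricAvg (Fm : Set (EuclideanSpace ℝ (Fin d)))
        (Fp : Set (EuclideanSpace ℝ (Fin d))) :=
  stmt_16_general a b F hBV ξ hξ Fm Fp hFm hFp hP1
end
end
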